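/- arXiv:2510.26344 — 2 statements merged into one kernel-verified Lean document; each statement's English description precedes it below -/
import Mathlib

section
/- Convergence of the estimated graph embedding (conclusion of Theorem 1, finite-dimensional form): Let S be a finite nonempty index set. For each j ∈ S, let (X_t^j, Y_t^j)_{t≥1} be an i.i.d. sequence of pairs of random vectors in ℝ^{d_x} × ℝ^{d_y} on a common probability space, almost surely bounded in Euclidean norm, with C_XX^j := E[X_1^j (X_1^j)ᵀ] positive definite and C_YX^j := E[Y_1^j (X_1^j)ᵀ]. Let (λ_T)_{T≥1} be positive reals with λ_T → 0 and T·λ_T → ∞, and define the estimators Ĉ_T^j := ((1/T)Σ_{t=1}^T Y_t^j (X_t^j)ᵀ)·((1/T)Σ_{t=1}^T X_t^j (X_t^j)ᵀ + λ_T I)^{-1} and the targets C^j := C_YX^j·(C_XX^j)^{-1}. Then for any fixed vectors v_j ∈ ℝ^{d_x} (j ∈ S), almost surely ‖Σ_{j∈S} Ĉ_T^j v_j − Σ_{j∈S} C^j v_j‖ → 0 as T → ∞. -/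
open MeasureTheory ProbabilityTheory Filter Matrix

/-- Euclidean norm of a finite real vector. -/
noncomputable def vecNorm {n : Type*} [Fintype n] (v : n → ℝ) : ℝ :=
  Real.sqrt (∑ i, v i ^ 2)

/-- Spectral norm (ℓ²-operator norm) of a real matrix. -/
noncomputable def specNorm {m n : Type*} [Fintype m] [Fintype n] (M : Matrix m n ℝ) : ℝ :=
  sSup {r : ℝ | ∃ x : n → ℝ, ∑ i, x i ^ 2 = 1 ∧ r = vecNorm (M.mulVec x)}

/-- Smallest eigenvalue (Rayleigh quotient form) of a symmetric real matrix. -/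
noncomputable def eigMin {n : Type*} [Fintype n] (M : Matrix n n ℝ) : ℝ :=
  sInf {r : ℝ | ∃ x : n → ℝ, ∑ i, x i ^ 2 = 1 ∧ r = x ⬝ᵥ M.mulVec x}

/-- Largest eigenvalue (Rayleigh quotient form) of a symmetric real matrix. -/
noncomputable def eigMax {n : Type*} [Fintype n] (M : Matrix n n ℝ) : ℝ :=
  sSup {r : ℝ | ∃ x : n → ℝ, ∑ i, x i ^ 2 = 1 ∧ r = x ⬝ᵥ M.mulVec x}

/-- Entrywise expectation of a random matrix. -/
noncomputable def mExp {Ω : Type*} [MeasurableSpace Ω] (μ : Measure Ω)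
    {m n : Type*} (X : Ω → Matrix m n ℝ) : Matrix m n ℝ :=
  Matrix.of fun i j => ∫ ω, X ω i j ∂μ

/-!
Boundedness makes every entry of `Y_t X_tᵀ` and `X_t X_tᵀ` integrable, so the strong law of large
numbers, applied entrywise, gives almost sure convergence of the empirical second moments to
`C_YX` and `C_XX`. As `λ_T → 0`, the regularized empirical moment `Ĉ_XX + λ_T I` also tends to
`C_XX`, which is invertible; matrix inversion is continuous there, so `Ĉ_T → C_YX C_XX⁻¹` almost
surely, and the finite aggregate converges by continuity.
-/

open Topology Finset

lemma abs_apply_le_vecNorm {n : Type*} [Fintype n] (v : n → ℝ) (i : n) : |v i| ≤ vecNorm v := by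
  rw [← Real.sqrt_sq_eq_abs]
  exact Real.sqrt_le_sqrt (single_le_sum (f := fun i => v i ^ 2) (fun i _ => sq_nonneg _)
    (mem_univ i))

lemma Filter.Tendsto.vecNorm_sub_nhds_zero {α n : Type*} [Fintype n] {l : Filter α}
    {u : α → n → ℝ} {a : n → ℝ} (h : Tendsto u l (𝓝 a)) :
    Tendsto (fun x => vecNorm (u x - a)) l (𝓝 0) := by
  have hcont : Continuous fun w : n → ℝ => vecNorm (w - a) := by unfold vecNorm; fun_prop
  have hzero : vecNorm (a - a) = 0 := by simp [vecNorm]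
  rw [← hzero]
  exact (hcont.tendsto a).comp h

lemma Filter.Tendsto.mul_inv_add_smul_one {α m n : Type*} [Fintype n] [DecidableEq n]
    {l : Filter α} {A : α → Matrix m n ℝ} {B : α → Matrix n n ℝ} {c : α → ℝ}
    {A₀ : Matrix m n ℝ} {B₀ : Matrix n n ℝ} (hA : Tendsto A l (𝓝 A₀))
    (hB : Tendsto B l (𝓝 B₀)) (hc : Tendsto c l (𝓝 0)) (hB₀ : IsUnit B₀.det) :
    Tendsto (fun x => A x * (B x + c x • 1)⁻¹) l (𝓝 (A₀ * B₀⁻¹)) := by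
  have hinv : ContinuousAt Inv.inv B₀ := by
    refine continuousAt_matrix_inv _ ?_
    rw [Ring.inverse_eq_inv']
    exact continuousAt_inv₀ hB₀.ne_zero
  have hreg : Tendsto (fun x => B x + c x • (1 : Matrix n n ℝ)) l (𝓝 B₀) := by
    simpa using hB.add (hc.smul_const (1 : Matrix n n ℝ))
  exact ((continuous_fst.matrix_mul continuous_snd).tendsto (A₀, B₀⁻¹)).comp
    (hA.prodMk_nhds (hinv.tendsto.comp hreg))

section StrongLaw

variable {Ω E : Type*} [MeasurableSpace Ω] [MeasurableSpace E] {μ : Measure Ω}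

lemma integrable_vecMulVec_apply [IsFiniteMeasure μ] {m n : Type*} [Fintype m] [Fintype n]
    {U : Ω → m → ℝ} {V : Ω → n → ℝ} {a b : ℝ} (hUm : AEMeasurable U μ) (hVm : AEMeasurable V μ)
    (hU : ∀ᵐ ω ∂μ, vecNorm (U ω) ≤ a) (hV : ∀ᵐ ω ∂μ, vecNorm (V ω) ≤ b) (i : m) (k : n) :
    Integrable (fun ω => vecMulVec (U ω) (V ω) i k) μ := by
  refine Integrable.of_bound ?_ (a * b) ?_
  · simp only [vecMulVec_apply]
    exact (((measurable_pi_apply i).comp_aemeasurable hUm).mul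
      ((measurable_pi_apply k).comp_aemeasurable hVm)).aestronglyMeasurable
  · filter_upwards [hU, hV] with ω hUω hVω
    have hi := (abs_apply_le_vecNorm (U ω) i).trans hUω
    have hk := (abs_apply_le_vecNorm (V ω) k).trans hVω
    simpa [vecMulVec_apply, abs_mul] using
      mul_le_mul hi hk (abs_nonneg _) ((abs_nonneg _).trans hi)

theorem ae_tendsto_average_mExp {m n : Type*} [Countable m] [Countable n] (Z : ℕ → Ω → E)
    (hindep : Pairwise fun s t => IndepFun (Z s) (Z t) μ)
    (hident : ∀ t, IdentDistrib (Z t) (Z 0) μ μ)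
    (f : E → Matrix m n ℝ) (hf : ∀ i k, Measurable fun z => f z i k)
    (hint : ∀ i k, Integrable (fun ω => f (Z 0 ω) i k) μ) :
    ∀ᵐ ω ∂μ, Tendsto (fun T : ℕ => (T : ℝ)⁻¹ • ∑ t ∈ range T, f (Z t ω)) atTop
      (𝓝 (mExp μ fun ω => f (Z 0 ω))) := by
  have hentry : ∀ i k, ∀ᵐ ω ∂μ, Tendsto (fun T : ℕ => (∑ t ∈ range T, f (Z t ω) i k) / T)
      atTop (𝓝 (mExp μ (fun ω => f (Z 0 ω)) i k)) := fun i k =>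
    strong_law_ae_real (fun t ω => f (Z t ω) i k) (hint i k)
      (fun s t hst => (hindep hst).comp (hf i k) (hf i k)) (fun t => (hident t).comp (hf i k))
  filter_upwards [ae_all_iff.2 fun i => ae_all_iff.2 (hentry i)] with ω hω
  refine tendsto_pi_nhds.2 fun i => tendsto_pi_nhds.2 fun k => ?_
  simpa [Matrix.sum_apply, div_eq_inv_mul] using hω i k

theorem ae_tendsto_regularized_estimator [IsFiniteMeasure μ] {m n : Type*} [Fintype m]
    [Fintype n] [DecidableEq n] (X : ℕ → Ω → n → ℝ) (Y : ℕ → Ω → m → ℝ)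
    (hindep : Pairwise fun s t =>
      IndepFun (fun ω => (X s ω, Y s ω)) (fun ω => (X t ω, Y t ω)) μ)
    (hident : ∀ t, IdentDistrib (fun ω => (X t ω, Y t ω)) (fun ω => (X 0 ω, Y 0 ω)) μ μ)
    {κx κy : ℝ} (hbd : ∀ᵐ ω ∂μ, vecNorm (X 0 ω) ≤ κx ∧ vecNorm (Y 0 ω) ≤ κy)
    (hCXX : IsUnit (mExp μ fun ω => vecMulVec (X 0 ω) (X 0 ω)).det)
    {lam : ℕ → ℝ} (hlam : Tendsto lam atTop (𝓝 0)) :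
    ∀ᵐ ω ∂μ, Tendsto (fun T : ℕ =>
      ((T : ℝ)⁻¹ • ∑ t ∈ range T, vecMulVec (Y t ω) (X t ω)) *
        ((T : ℝ)⁻¹ • (∑ t ∈ range T, vecMulVec (X t ω) (X t ω)) + lam T • 1)⁻¹) atTop
      (𝓝 ((mExp μ fun ω => vecMulVec (Y 0 ω) (X 0 ω)) *
        (mExp μ fun ω => vecMulVec (X 0 ω) (X 0 ω))⁻¹)) := by
  have hZ := (hident 0).aemeasurable_fst
  have hXm : AEMeasurable (X 0) μ := measurable_fst.comp_aemeasurable hZ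
  have hYm : AEMeasurable (Y 0) μ := measurable_snd.comp_aemeasurable hZ
  have hXb : ∀ᵐ ω ∂μ, vecNorm (X 0 ω) ≤ κx := hbd.mono fun _ h => h.1
  have hYb : ∀ᵐ ω ∂μ, vecNorm (Y 0 ω) ≤ κy := hbd.mono fun _ h => h.2
  filter_upwards [ae_tendsto_average_mExp _ hindep hident (fun p => vecMulVec p.2 p.1)
      (fun i k => by simp only [vecMulVec_apply]; fun_prop)
      (integrable_vecMulVec_apply hYm hXm hYb hXb),
    ae_tendsto_average_mExp _ hindep hident (fun p => vecMulVec p.1 p.1)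
      (fun i k => by simp only [vecMulVec_apply]; fun_prop)
      (integrable_vecMulVec_apply hXm hXm hXb hXb)] with ω hYX hXX
  exact hYX.mul_inv_add_smul_one hXX hlam hCXX

end StrongLaw

theorem stmt1_general {Ω : Type*} [MeasurableSpace Ω] (μ : Measure Ω) [IsProbabilityMeasure μ]
    {S : Type*} [Fintype S]
    (dx dy : ℕ)
    (X : S → ℕ → Ω → (Fin dx → ℝ)) (Y : S → ℕ → Ω → (Fin dy → ℝ))
    (hindep : ∀ j, iIndepFun (fun t ω => (X j t ω, Y j t ω)) μ)
    (hident : ∀ j t, IdentDistrib (fun ω => (X j t ω, Y j t ω))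
      (fun ω => (X j 0 ω, Y j 0 ω)) μ μ)
    (hbd : ∀ j, ∃ κx κy : ℝ, ∀ᵐ ω ∂μ, vecNorm (X j 0 ω) ≤ κx ∧ vecNorm (Y j 0 ω) ≤ κy)
    (CXX : S → Matrix (Fin dx) (Fin dx) ℝ) (CYX : S → Matrix (Fin dy) (Fin dx) ℝ)
    (hCXX : ∀ j, CXX j = mExp μ (fun ω => vecMulVec (X j 0 ω) (X j 0 ω)))
    (hCYX : ∀ j, CYX j = mExp μ (fun ω => vecMulVec (Y j 0 ω) (X j 0 ω)))
    (hpos : ∀ j, (CXX j).PosDef)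
    (lam : ℕ → ℝ)
    (hlam0 : Tendsto lam atTop (nhds 0))
    (v : S → (Fin dx → ℝ)) :
    ∀ᵐ ω ∂μ, Tendsto (fun T : ℕ =>
      vecNorm ((∑ j : S,
          (((T : ℝ)⁻¹ • ∑ t ∈ Finset.range T, vecMulVec (Y j t ω) (X j t ω)) *
            ((T : ℝ)⁻¹ • (∑ t ∈ Finset.range T, vecMulVec (X j t ω) (X j t ω)) +
              lam T • 1)⁻¹).mulVec (v j))
        - ∑ j : S, ((CYX j) * (CXX j)⁻¹).mulVec (v j))) atTop (nhds 0) := by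
  have hlim : ∀ j, ∀ᵐ ω ∂μ, Tendsto (fun T : ℕ =>
      ((T : ℝ)⁻¹ • ∑ t ∈ range T, vecMulVec (Y j t ω) (X j t ω)) *
        ((T : ℝ)⁻¹ • (∑ t ∈ range T, vecMulVec (X j t ω) (X j t ω)) + lam T • 1)⁻¹) atTop
      (𝓝 (CYX j * (CXX j)⁻¹)) := fun j => by
    obtain ⟨κx, κy, hb⟩ := hbd j
    rw [hCYX, hCXX]
    exact ae_tendsto_regularized_estimator (X j) (Y j) (fun s t hst => (hindep j).indepFun hst)
      (hident j) hb (hCXX j ▸ (hpos j).det_pos.ne'.isUnit) hlam0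
  filter_upwards [ae_all_iff.2 hlim] with ω hω
  refine Tendsto.vecNorm_sub_nhds_zero (tendsto_finsetSum _ fun j _ => ?_)
  exact ((continuous_id.matrix_mulVec continuous_const).tendsto _).comp (hω j)

/-- Convergence of the estimated graph embedding: for each index `j` in a
finite nonempty set `S`, an i.i.d. almost-surely bounded sequence of pairs
`(X j t, Y j t)` (sample index `t = 0, 1, …`, with `X j 0` playing the role of `X_1^j`)
with positive definite `C_XX^j` yields regularized estimators whose aggregated action on
fixed vectors `v j` converges almost surely to that of the targets `C_YX^j (C_XX^j)⁻¹`. -/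
theorem stmt1 {Ω : Type*} [MeasurableSpace Ω] (μ : Measure Ω) [IsProbabilityMeasure μ]
    {S : Type*} [Fintype S] [Nonempty S]
    (dx dy : ℕ)
    (X : S → ℕ → Ω → (Fin dx → ℝ)) (Y : S → ℕ → Ω → (Fin dy → ℝ))
    (hmeas : ∀ j t, Measurable (fun ω => (X j t ω, Y j t ω)))
    (hindep : ∀ j, iIndepFun (fun t ω => (X j t ω, Y j t ω)) μ)
    (hident : ∀ j t, IdentDistrib (fun ω => (X j t ω, Y j t ω))
      (fun ω => (X j 0 ω, Y j 0 ω)) μ μ)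
    (hbd : ∀ j, ∃ κx κy : ℝ, ∀ᵐ ω ∂μ, vecNorm (X j 0 ω) ≤ κx ∧ vecNorm (Y j 0 ω) ≤ κy)
    (CXX : S → Matrix (Fin dx) (Fin dx) ℝ) (CYX : S → Matrix (Fin dy) (Fin dx) ℝ)
    (hCXX : ∀ j, CXX j = mExp μ (fun ω => vecMulVec (X j 0 ω) (X j 0 ω)))
    (hCYX : ∀ j, CYX j = mExp μ (fun ω => vecMulVec (Y j 0 ω) (X j 0 ω)))
    (hpos : ∀ j, (CXX j).PosDef)
    (lam : ℕ → ℝ) (hlampos : ∀ T, 0 < lam T)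
    (hlam0 : Tendsto lam atTop (nhds 0))
    (hTlam : Tendsto (fun T : ℕ => (T : ℝ) * lam T) atTop atTop)
    (v : S → (Fin dx → ℝ)) :
    ∀ᵐ ω ∂μ, Tendsto (fun T : ℕ =>
      vecNorm ((∑ j : S,
          (((T : ℝ)⁻¹ • ∑ t ∈ Finset.range T, vecMulVec (Y j t ω) (X j t ω)) *
            ((T : ℝ)⁻¹ • (∑ t ∈ Finset.range T, vecMulVec (X j t ω) (X j t ω)) +
              lam T • 1)⁻¹).mulVec (v j))
        - ∑ j : S, ((CYX j) * (CXX j)⁻¹).mulVec (v j))) atTop (nhds 0) :=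
  stmt1_general μ dx dy X Y hindep hident hbd CXX CYX hCXX hCYX hpos lam hlam0 v
end

section
/- Deterministic perturbation bound for the regularized conditional operator (core estimate of the Propositions on sub-operator convergence): Let A, Â ∈ ℝ^{d×d} be symmetric with A positive definite and Â positive semidefinite, let B ∈ ℝ^{m×m} be symmetric positive semidefinite, and suppose C ∈ ℝ^{m×d} factorizes as C = B^{1/2} V A^{1/2} for some matrix V with ‖V‖ ≤ 1. Let Ĉ ∈ ℝ^{m×d} be arbitrary and λ > 0. Then ‖C·A^{-1} − Ĉ·(Â + λI)^{-1}‖ ≤ √(λ_max(B))·(‖Â − A‖ + λ)/(√(λ_min(A))·λ_min(Â + λI)) + ‖Ĉ − C‖/λ_min(Â + λI). -/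
/-!
Put `Q = Â + λI`. The resolvent identity
`C A⁻¹ - Ĉ Q⁻¹ = C A⁻¹ (Q - A) Q⁻¹ - (Ĉ - C) Q⁻¹`
reduces the bound to `‖Q⁻¹‖ ≤ 1 / λ_min(Q)`, `‖Q - A‖ ≤ ‖Â - A‖ + λ` and
`‖C A⁻¹‖ = ‖B^{1/2} V A^{-1/2}‖ ≤ √λ_max(B) / √λ_min(A)`. The norm bounds on `Q⁻¹`, `B^{1/2}` and
`A^{-1/2}` all come from the Rayleigh-quotient inequalities
`λ_min(M) ‖x‖² ≤ ⟪x, M x⟫ ≤ λ_max(M) ‖x‖²` combined with `‖M^{1/2} x‖² = ⟪x, M x⟫`.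
-/

open MeasureTheory ProbabilityTheory Filter Matrix

namespace Matrix.PosSemidef

open scoped ComplexOrder

/-- The positive semidefinite square root of a positive semidefinite matrix -/
noncomputable def sqrt {n : Type*} [Fintype n] [DecidableEq n] {𝕜 : Type*} [RCLike 𝕜]
    {A : Matrix n n 𝕜} (hA : A.PosSemidef) : Matrix n n 𝕜 :=
  (hA.1.eigenvectorUnitary : Matrix n n 𝕜) *
    diagonal ((RCLike.ofReal : ℝ → 𝕜) ∘ Real.sqrt ∘ hA.1.eigenvalues) *
  (star hA.1.eigenvectorUnitary : Matrix n n 𝕜)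

end Matrix.PosSemidef

open scoped MatrixOrder Matrix.Norms.L2Operator RealInnerProductSpace
open Metric

lemma Matrix.PosSemidef.sqrt_eq_cfcSqrt {n : Type*} [Fintype n] [DecidableEq n]
    {A : Matrix n n ℝ} (hA : A.PosSemidef) : hA.sqrt = CFC.sqrt A := by
  rw [CFC.sqrt_eq_real_sqrt A hA.nonneg, cfcₙ_eq_cfc, hA.1.cfc_eq, IsHermitian.cfc,
    Unitary.conjStarAlgAut_apply]
  rfl

lemma Matrix.mul_inv_sub_mul_inv_eq {m n R : Type*} [Fintype n] [DecidableEq n] [CommRing R]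
    {P Q : Matrix n n R} (hP : IsUnit P) (hQ : IsUnit Q) (X Y : Matrix m n R) :
    X * P⁻¹ - Y * Q⁻¹ = X * P⁻¹ * (Q - P) * Q⁻¹ - (Y - X) * Q⁻¹ := by
  rw [Matrix.mul_sub, Matrix.sub_mul, Matrix.sub_mul, Matrix.mul_assoc _ Q,
    mul_nonsing_inv Q ((isUnit_iff_isUnit_det Q).1 hQ), Matrix.mul_assoc X P⁻¹ P,
    nonsing_inv_mul P ((isUnit_iff_isUnit_det P).1 hP), Matrix.mul_one, Matrix.mul_one]
  abel

variable {m n : Type*} [Fintype m] [Fintype n]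

lemma setOf_sum_sq_eq_one_eq_image (g : (n → ℝ) → ℝ) :
    {r : ℝ | ∃ x : n → ℝ, ∑ i, x i ^ 2 = 1 ∧ r = g x} =
      (fun y : EuclideanSpace ℝ n => g y.ofLp) '' sphere 0 1 := by
  have hsphere (y : EuclideanSpace ℝ n) : y ∈ sphere 0 1 ↔ ∑ i, y.ofLp i ^ 2 = 1 := by
    rw [mem_sphere_zero_iff_norm, ← EuclideanSpace.real_norm_sq_eq,
      pow_eq_one_iff_of_nonneg (norm_nonneg y) two_ne_zero]
  ext r
  constructor
  · rintro ⟨x, hx, rfl⟩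
    exact ⟨WithLp.toLp 2 x, (hsphere _).2 hx, rfl⟩
  · rintro ⟨y, hy, rfl⟩
    exact ⟨y.ofLp, (hsphere y).1 hy, rfl⟩

lemma vecNorm_eq_norm_toLp (v : n → ℝ) : vecNorm v = ‖WithLp.toLp 2 v‖ := by
  simp [vecNorm, EuclideanSpace.norm_eq]

lemma specNorm_eq_l2_opNorm [DecidableEq n] (M : Matrix m n ℝ) : specNorm M = ‖M‖ := by
  rw [specNorm, setOf_sum_sq_eq_one_eq_image, l2_opNorm_def,
    ← ContinuousLinearMap.sSup_sphere_eq_norm]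
  simp only [vecNorm_eq_norm_toLp]
  rfl

lemma eigMin_of_isEmpty [IsEmpty n] (M : Matrix n n ℝ) : eigMin M = 0 := by
  simp [eigMin]

section Rayleigh

-- `eigMin M` and `eigMax M` are, by definition, the `sInf` and `sSup` of this set.
def rayleighValues (M : Matrix n n ℝ) : Set ℝ :=
  {r : ℝ | ∃ x : n → ℝ, ∑ i, x i ^ 2 = 1 ∧ r = x ⬝ᵥ M *ᵥ x}

variable [DecidableEq n]

lemma rayleighValues_eq_image (M : Matrix n n ℝ) :
    rayleighValues M = (fun y => ⟪y, toEuclideanCLM (𝕜 := ℝ) M y⟫) '' sphere 0 1 := by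
  simp only [rayleighValues, setOf_sum_sq_eq_one_eq_image, inner_toEuclideanCLM]

lemma isCompact_rayleighValues (M : Matrix n n ℝ) : IsCompact (rayleighValues M) := by
  rw [rayleighValues_eq_image]
  exact (isCompact_sphere 0 1).image (by fun_prop)

lemma inner_div_norm_sq_mem_rayleighValues (M : Matrix n n ℝ) {y : EuclideanSpace ℝ n}
    (hy : y ≠ 0) :
    ⟪y, toEuclideanCLM (𝕜 := ℝ) M y⟫ / ‖y‖ ^ 2 ∈ rayleighValues M := by
  rw [rayleighValues_eq_image]
  refine ⟨‖y‖⁻¹ • y, by simpa using norm_smul_inv_norm (𝕜 := ℝ) hy, ?_⟩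
  simp only [map_smul, real_inner_smul_left, real_inner_smul_right]
  field_simp

lemma eigMin_mul_norm_sq_le_inner (M : Matrix n n ℝ) (y : EuclideanSpace ℝ n) :
    eigMin M * ‖y‖ ^ 2 ≤ ⟪y, toEuclideanCLM (𝕜 := ℝ) M y⟫ := by
  rcases eq_or_ne y 0 with rfl | hy
  · simp
  rw [← le_div_iff₀ (by positivity)]
  exact csInf_le (isCompact_rayleighValues M).bddBelow (inner_div_norm_sq_mem_rayleighValues M hy)

lemma inner_le_eigMax_mul_norm_sq (M : Matrix n n ℝ) (y : EuclideanSpace ℝ n) :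
    ⟪y, toEuclideanCLM (𝕜 := ℝ) M y⟫ ≤ eigMax M * ‖y‖ ^ 2 := by
  rcases eq_or_ne y 0 with rfl | hy
  · simp
  rw [← div_le_iff₀ (by positivity)]
  exact le_csSup (isCompact_rayleighValues M).bddAbove (inner_div_norm_sq_mem_rayleighValues M hy)

lemma eigMin_mul_norm_le_norm_apply (M : Matrix n n ℝ) (y : EuclideanSpace ℝ n) :
    eigMin M * ‖y‖ ≤ ‖toEuclideanCLM (𝕜 := ℝ) M y‖ := by
  rcases eq_or_ne y 0 with rfl | hy
  · simp
  have hy' : 0 < ‖y‖ := norm_pos_iff.2 hy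
  have := (eigMin_mul_norm_sq_le_inner M y).trans (real_inner_le_norm _ _)
  nlinarith

variable [Nonempty n]

lemma rayleighValues_nonempty (M : Matrix n n ℝ) : (rayleighValues M).Nonempty := by
  rw [rayleighValues_eq_image]
  exact (NormedSpace.sphere_nonempty.2 zero_le_one).image _

lemma eigMin_pos {M : Matrix n n ℝ} (hM : M.PosDef) : 0 < eigMin M := by
  obtain ⟨x, hx, hmin⟩ := (isCompact_rayleighValues M).sInf_mem (rayleighValues_nonempty M)
  have hx0 : x ≠ 0 := by
    rintro rfl
    simp at hx
  rw [show eigMin M = sInf (rayleighValues M) from rfl, hmin]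
  simpa using hM.dotProduct_mulVec_pos hx0

lemma le_eigMin_add_smul_one {M : Matrix n n ℝ} (hM : M.PosSemidef) (c : ℝ) :
    c ≤ eigMin (M + c • 1) := by
  show c ≤ sInf (rayleighValues (M + c • 1))
  refine le_csInf (rayleighValues_nonempty _) ?_
  rw [rayleighValues_eq_image]
  rintro - ⟨y, hy, rfl⟩
  rw [mem_sphere_zero_iff_norm] at hy
  have hMy : 0 ≤ ⟪y, toEuclideanCLM (𝕜 := ℝ) M y⟫ := by
    simpa [inner_toEuclideanCLM] using hM.dotProduct_mulVec_nonneg y.ofLp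
  simpa [inner_add_right, real_inner_smul_right, hy] using hMy

end Rayleigh

section OperatorNorm

variable [DecidableEq n]

lemma norm_toEuclideanCLM_cfcSqrt_apply_sq {B : Matrix n n ℝ} (hB : B.PosSemidef)
    (y : EuclideanSpace ℝ n) :
    ‖toEuclideanCLM (𝕜 := ℝ) (CFC.sqrt B) y‖ ^ 2 = ⟪y, toEuclideanCLM (𝕜 := ℝ) B y⟫ := by
  have hS : star (toEuclideanCLM (𝕜 := ℝ) (CFC.sqrt B)) = toEuclideanCLM (𝕜 := ℝ) (CFC.sqrt B) :=
    by rw [← map_star, (CFC.sqrt_nonneg B).isSelfAdjoint.star_eq]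
  rw [ContinuousLinearMap.apply_norm_sq_eq_inner_adjoint_right,
    ← ContinuousLinearMap.star_eq_adjoint, hS, ← ContinuousLinearMap.mul_def, ← map_mul,
    CFC.sqrt_mul_sqrt_self B hB.nonneg]
  rfl

lemma l2_opNorm_cfcSqrt_le {B : Matrix n n ℝ} (hB : B.PosSemidef) :
    ‖CFC.sqrt B‖ ≤ √(eigMax B) := by
  refine ContinuousLinearMap.opNorm_le_bound _ (Real.sqrt_nonneg _) fun y => ?_
  rw [← Real.sqrt_sq (norm_nonneg _), ← Real.sqrt_sq (norm_nonneg y),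
    ← Real.sqrt_mul' _ (sq_nonneg _)]
  gcongr
  exact (norm_toEuclideanCLM_cfcSqrt_apply_sq hB y).trans_le (inner_le_eigMax_mul_norm_sq B y)

lemma sqrt_eigMin_mul_norm_le_norm_cfcSqrt_apply {A : Matrix n n ℝ} (hA : A.PosSemidef)
    (y : EuclideanSpace ℝ n) :
    √(eigMin A) * ‖y‖ ≤ ‖toEuclideanCLM (𝕜 := ℝ) (CFC.sqrt A) y‖ := by
  rw [← Real.sqrt_sq (norm_nonneg (toEuclideanCLM (𝕜 := ℝ) _ y)), ← Real.sqrt_sq (norm_nonneg y),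
    ← Real.sqrt_mul' _ (sq_nonneg _)]
  gcongr
  exact (eigMin_mul_norm_sq_le_inner A y).trans_eq (norm_toEuclideanCLM_cfcSqrt_apply_sq hA y).symm

lemma isUnit_of_mul_norm_le_norm_apply {M : Matrix n n ℝ} {c : ℝ} (hc : 0 < c)
    (hM : ∀ y, c * ‖y‖ ≤ ‖toEuclideanCLM (𝕜 := ℝ) M y‖) : IsUnit M := by
  refine (isUnit_iff_isUnit_det M).2 (isUnit_iff_ne_zero.2 fun h => ?_)
  obtain ⟨v, hv, hMv⟩ := exists_mulVec_eq_zero_iff.2 h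
  have := hM (WithLp.toLp 2 v)
  simp only [toEuclideanCLM_toLp, hMv, WithLp.toLp_zero, norm_zero] at this
  exact (mul_pos hc (norm_pos_iff.2 (by simpa using hv))).not_ge this

lemma l2_opNorm_inv_le {M : Matrix n n ℝ} {c : ℝ} (hc : 0 < c)
    (hM : ∀ y, c * ‖y‖ ≤ ‖toEuclideanCLM (𝕜 := ℝ) M y‖) : ‖M⁻¹‖ ≤ c⁻¹ := by
  have hdet := (isUnit_iff_isUnit_det M).1 (isUnit_of_mul_norm_le_norm_apply hc hM)
  refine ContinuousLinearMap.opNorm_le_bound _ (inv_nonneg.2 hc.le) fun y => ?_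
  have := hM (toEuclideanCLM (𝕜 := ℝ) M⁻¹ y)
  rw [← mul_apply_eq_comp, ← map_mul, mul_nonsing_inv M hdet, map_one, one_apply_eq_self] at this
  rw [inv_mul_eq_div, le_div_iff₀ hc, mul_comm]
  exact this

lemma l2_opNorm_smul_one_le (c : ℝ) : ‖(c • 1 : Matrix n n ℝ)‖ ≤ |c| := by
  rw [cstar_norm_def, map_smul, map_one]
  refine (norm_smul_le c (1 : EuclideanSpace ℝ n →L[ℝ] EuclideanSpace ℝ n)).trans ?_
  rw [Real.norm_eq_abs]
  exact mul_le_of_le_one_right (abs_nonneg c) ContinuousLinearMap.norm_id_le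

end OperatorNorm

section Perturbation

variable [DecidableEq n]

lemma l2_opNorm_mul_inv_sub_mul_inv_le {P Q : Matrix n n ℝ} (hP : IsUnit P) (hQ : IsUnit Q)
    (X Y : Matrix m n ℝ) :
    ‖X * P⁻¹ - Y * Q⁻¹‖ ≤ ‖X * P⁻¹‖ * ‖Q - P‖ * ‖Q⁻¹‖ + ‖Y - X‖ * ‖Q⁻¹‖ := by
  rw [mul_inv_sub_mul_inv_eq hP hQ]
  refine (norm_sub_le _ _).trans (add_le_add ?_ (l2_opNorm_mul _ _))
  exact (l2_opNorm_mul _ _).trans (by gcongr; exact l2_opNorm_mul _ _)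

variable [DecidableEq m] [Nonempty n]

lemma l2_opNorm_cfcSqrt_mul_mul_cfcSqrt_mul_inv_le {A : Matrix n n ℝ} (hA : A.PosDef)
    {B : Matrix m m ℝ} (hB : B.PosSemidef) {V : Matrix m n ℝ} (hV : ‖V‖ ≤ 1) :
    ‖CFC.sqrt B * V * CFC.sqrt A * A⁻¹‖ ≤ √(eigMax B) / √(eigMin A) := by
  set s := CFC.sqrt A
  have hss : s * s = A := CFC.sqrt_mul_sqrt_self A hA.posSemidef.nonneg
  have hs : IsUnit s := isUnit_of_mul_isUnit_left (hss ▸ hA.isUnit)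
  have hsA : s * A⁻¹ = s⁻¹ := by
    rw [← hss, Matrix.mul_inv_rev, ← Matrix.mul_assoc,
      mul_nonsing_inv s ((isUnit_iff_isUnit_det s).1 hs), Matrix.one_mul]
  have hα : 0 < √(eigMin A) := Real.sqrt_pos.2 (eigMin_pos hA)
  have hsinv : ‖s⁻¹‖ ≤ (√(eigMin A))⁻¹ :=
    l2_opNorm_inv_le hα (sqrt_eigMin_mul_norm_le_norm_cfcSqrt_apply hA.posSemidef)
  calc ‖CFC.sqrt B * V * s * A⁻¹‖ = ‖CFC.sqrt B * V * s⁻¹‖ := by rw [Matrix.mul_assoc _ s, hsA]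
    _ ≤ ‖CFC.sqrt B‖ * ‖V‖ * ‖s⁻¹‖ :=
        (l2_opNorm_mul _ _).trans (by gcongr; exact l2_opNorm_mul _ _)
    _ ≤ √(eigMax B) * 1 * (√(eigMin A))⁻¹ := by gcongr; exact l2_opNorm_cfcSqrt_le hB
    _ = √(eigMax B) / √(eigMin A) := by ring

theorem l2_opNorm_mul_inv_sub_mul_add_smul_one_inv_le {A Ahat : Matrix n n ℝ} (hA : A.PosDef)
    (hAhat : Ahat.PosSemidef) {B : Matrix m m ℝ} (hB : B.PosSemidef) {V : Matrix m n ℝ}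
    (hV : ‖V‖ ≤ 1) {C : Matrix m n ℝ} (hC : C = CFC.sqrt B * V * CFC.sqrt A)
    (Chat : Matrix m n ℝ) {lam : ℝ} (hlam : 0 < lam) :
    ‖C * A⁻¹ - Chat * (Ahat + lam • 1)⁻¹‖ ≤
      √(eigMax B) * (‖Ahat - A‖ + lam) / (√(eigMin A) * eigMin (Ahat + lam • 1)) +
        ‖Chat - C‖ / eigMin (Ahat + lam • 1) := by
  set Q := Ahat + lam • (1 : Matrix n n ℝ)
  have hμ : 0 < eigMin Q := hlam.trans_le (le_eigMin_add_smul_one hAhat lam)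
  have hQ : IsUnit Q := isUnit_of_mul_norm_le_norm_apply hμ (eigMin_mul_norm_le_norm_apply Q)
  have hQinv : ‖Q⁻¹‖ ≤ (eigMin Q)⁻¹ := l2_opNorm_inv_le hμ (eigMin_mul_norm_le_norm_apply Q)
  have hQA : ‖Q - A‖ ≤ ‖Ahat - A‖ + lam := by
    rw [show Q - A = Ahat - A + lam • 1 from add_sub_right_comm _ _ _]
    exact (norm_add_le _ _).trans
      (by gcongr; exact (l2_opNorm_smul_one_le lam).trans_eq (abs_of_pos hlam))
  have hCA : ‖C * A⁻¹‖ ≤ √(eigMax B) / √(eigMin A) :=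
    hC ▸ l2_opNorm_cfcSqrt_mul_mul_cfcSqrt_mul_inv_le hA hB hV
  calc ‖C * A⁻¹ - Chat * Q⁻¹‖ ≤ ‖C * A⁻¹‖ * ‖Q - A‖ * ‖Q⁻¹‖ + ‖Chat - C‖ * ‖Q⁻¹‖ :=
        l2_opNorm_mul_inv_sub_mul_inv_le hA.isUnit hQ C Chat
    _ ≤ √(eigMax B) / √(eigMin A) * (‖Ahat - A‖ + lam) * (eigMin Q)⁻¹ +
        ‖Chat - C‖ * (eigMin Q)⁻¹ := by gcongr
    _ = _ := by ring

end Perturbation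

/-- Deterministic perturbation bound for the regularized conditional
operator: with `A` positive definite, `Â` positive semidefinite, `B` positive
semidefinite, and `C = B^{1/2} V A^{1/2}` for a contraction `V`, the regularized error is
bounded by the stated two-term estimate. -/
theorem stmt5 {d m : ℕ}
    (A Ahat : Matrix (Fin d) (Fin d) ℝ) (hA : A.PosDef) (hAhat : Ahat.PosSemidef)
    (B : Matrix (Fin m) (Fin m) ℝ) (hB : B.PosSemidef)
    (V : Matrix (Fin m) (Fin d) ℝ) (hV : specNorm V ≤ 1)
    (C : Matrix (Fin m) (Fin d) ℝ) (hC : C = hB.sqrt * V * hA.posSemidef.sqrt)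
    (Chat : Matrix (Fin m) (Fin d) ℝ) (lam : ℝ) (hlam : 0 < lam) :
    specNorm (C * A⁻¹ - Chat * (Ahat + lam • 1)⁻¹) ≤
      Real.sqrt (eigMax B) * (specNorm (Ahat - A) + lam) /
        (Real.sqrt (eigMin A) * eigMin (Ahat + lam • 1)) +
      specNorm (Chat - C) / eigMin (Ahat + lam • 1) := by
  rw [hB.sqrt_eq_cfcSqrt, hA.posSemidef.sqrt_eq_cfcSqrt] at hC
  simp only [specNorm_eq_l2_opNorm] at hV ⊢
  rcases isEmpty_or_nonempty (Fin d) with hd | hd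
  -- `eigMin` of a `0 × 0` matrix is `sInf ∅ = 0`, so the right-hand side is `x / 0 = 0`.
  · rw [Subsingleton.elim (C * A⁻¹ - Chat * (Ahat + lam • 1)⁻¹) 0, norm_zero]
    simp [eigMin_of_isEmpty]
  · exact l2_opNorm_mul_inv_sub_mul_add_smul_one_inv_le hA hAhat hB hV hC Chat hlam
end
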